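/- arXiv:2205.00835 — 2 statements merged into one kernel-verified Lean document; each statement's English description precedes it below -/
import Mathlib

section
/- Let A and Ã be gauge fields on the bonds of Λ related by A_{x,x+e_i} = π/2 + π θ_i(x) + Ã_{x,x+e_i} (mod 2π) for all x ∈ Λ and i = 1,…,d, with the convention A_{y,x} = −A_{x,y} and Ã_{y,x} = −Ã_{x,y}. Then for every plaquette ℘ with corners x, x+e_i, x+e_i+e_j, x+e_j (i ≠ j), the fluxes F_℘ = A_{x,x+e_i} + A_{x+e_i,x+e_i+e_j} + A_{x+e_i+e_j,x+e_j} + A_{x+e_j,x} and F̃_℘ (defined analogously from Ã) satisfy F_℘ ≡ F̃_℘ + π (mod 2π); in particular cos F_℘ = − cos F̃_℘. -/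
open Complex Matrix
open scoped ComplexOrder

namespace PiFlux

/-- `2*L ≠ 0` when `L ≠ 0`, so that `ZMod (2*L)` is a finite type. -/
instance instNeZero2L (L : ℕ) [NeZero L] : NeZero (2 * L) :=
  ⟨by have := NeZero.ne L; omega⟩

/-- A site of the periodic hypercubic lattice `Λ = {-L+1,…,L}^d` with periodic
boundary conditions: each coordinate is an element of `ZMod (2*L)`. -/
abbrev Site (L d : ℕ) := Fin d → ZMod (2 * L)

/-- The integer value in `{-L+1,…,L}` of a periodic coordinate. -/
def coordVal (L : ℕ) (z : ZMod (2 * L)) : ℤ := (z.val : ℤ) - (L : ℤ) + 1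

/-- The coordinate sum `x⁽¹⁾ + ⋯ + x⁽ᵈ⁾` of a site. -/
def coordSum (L d : ℕ) (x : Site L d) : ℤ := ∑ i, coordVal L (x i)

/-- `x + e_i`, with the periodic identification `L + 1 ≡ -L + 1`. -/
def shift (L d : ℕ) (i : Fin d) (x : Site L d) : Site L d :=
  Function.update x i (x i + 1)

/-- `θ_i(x) := x⁽¹⁾ + ⋯ + x⁽ⁱ⁻¹⁾`, plus `1` if `x⁽ⁱ⁾ = L`  (for the first
direction the sum is empty, so `θ_1(x)` is the indicator of `x⁽¹⁾ = L`). -/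
def theta (L d : ℕ) (i : Fin d) (x : Site L d) : ℤ :=
  (∑ k ∈ Finset.univ.filter (fun k => k < i), coordVal L (x k))
    + (if coordVal L (x i) = (L : ℤ) then 1 else 0)

/-- A classical U(1) gauge field: the real number `Ã_{x,x+e_i}` attached to the
positively oriented bond from `x` to `x + e_i`; the value on the reversed bond
is `Ã_{x+e_i,x} = -Ã_{x,x+e_i}`. -/
abbrev Gauge (L d : ℕ) := Site L d → Fin d → ℝ

/-- The canonical anticommutation relations for the fermion operators
`a x σ` (with `σ : Bool`; `true` = spin up, `false` = spin down). -/
def CAR {L d : ℕ} {F : Type*} [Fintype F] [DecidableEq F]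
    (a : Site L d → Bool → Matrix F F ℂ) : Prop :=
  (∀ x y σ τ, a x σ * (a y τ)ᴴ + (a y τ)ᴴ * a x σ
      = if x = y ∧ σ = τ then (1 : Matrix F F ℂ) else 0) ∧
  (∀ x y σ τ, a x σ * a y τ + a y τ * a x σ = 0)

/-- The flux `F_℘ = A_{x,x+e_i} + A_{x+e_i,x+e_i+e_j} + A_{x+e_i+e_j,x+e_j} + A_{x+e_j,x}`
through the plaquette with corners `x`, `x+e_i`, `x+e_i+e_j`, `x+e_j`, written
using `A_{y,x} = -A_{x,y}`. -/
def flux (L d : ℕ) (A : Gauge L d) (x : Site L d) (i j : Fin d) : ℝ :=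
  A x i + A (shift L d i x) j - A (shift L d j x) i - A x j

/-- Incrementing a coordinate changes its integer value by an odd amount. -/
lemma coordVal_add_one (L : ℕ) [NeZero L] (z : ZMod (2 * L)) :
    ∃ m : ℤ, coordVal L (z + 1) = coordVal L z + 1 + 2 * m := by
  haveI : Fact (1 < 2 * L) := ⟨by have := NeZero.ne L; omega⟩
  have hv : (z + 1).val = (z.val + 1) % (2 * L) := by
    rw [ZMod.val_add, ZMod.val_one]
  have hz := z.val_lt
  unfold coordVal
  by_cases h : z.val + 1 < 2 * L
  · exact ⟨0, by rw [hv, Nat.mod_eq_of_lt h]; push_cast; ring⟩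
  · refine ⟨-L, ?_⟩
    have hz1 : z.val + 1 = 2 * L := by omega
    rw [hv, hz1, Nat.mod_self]
    omega

/-- How `θ_j` changes under a shift in a different direction `i`. -/
lemma theta_shift (L d : ℕ) (i j : Fin d) (hij : i ≠ j) (x : Site L d) :
    theta L d j (shift L d i x) = theta L d j x
      + (if i < j then coordVal L (x i + 1) - coordVal L (x i) else 0) := by
  unfold theta shift
  have hupd : Function.update x i (x i + 1) j = x j := Function.update_of_ne hij.symm _ x
  rw [hupd]
  by_cases h : i < j
  · have hmem : i ∈ Finset.univ.filter (fun k => k < j) := by simp [h]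
    rw [Finset.sum_eq_sum_sdiff_singleton_add hmem
        (fun k => coordVal L (Function.update x i (x i + 1) k)),
      Finset.sum_eq_sum_sdiff_singleton_add hmem (fun k => coordVal L (x k)),
      Function.update_self, if_pos h]
    have hcongr : ∑ k ∈ (Finset.univ.filter (fun k => k < j)) \ {i},
        coordVal L (Function.update x i (x i + 1) k)
        = ∑ k ∈ (Finset.univ.filter (fun k => k < j)) \ {i}, coordVal L (x k) := by
      refine Finset.sum_congr rfl fun k hk => ?_
      rw [Function.update_of_ne (by simp at hk; exact hk.2) _ x]
    rw [hcongr]; ring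
  · have hcongr : ∑ k ∈ Finset.univ.filter (fun k => k < j),
        coordVal L (Function.update x i (x i + 1) k)
        = ∑ k ∈ Finset.univ.filter (fun k => k < j), coordVal L (x k) := by
      refine Finset.sum_congr rfl fun k hk => ?_
      have hki : k ≠ i := by simp at hk; exact fun e => h (e ▸ hk)
      rw [Function.update_of_ne hki _ x]
    rw [hcongr, if_neg h]; ring

/-- If `A_{x,x+e_i} = π/2 + π θ_i(x) + Ã_{x,x+e_i} (mod 2π)` for
all `x` and `i`, then for every plaquette the fluxes satisfy
`F_℘ ≡ F̃_℘ + π (mod 2π)`; in particular `cos F_℘ = - cos F̃_℘`. -/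
theorem flux_shift_pi (L d : ℕ) [NeZero L] (hd : 3 ≤ d) (A Atil : Gauge L d)
    (hrel : ∀ (x : Site L d) (i : Fin d), ∃ k : ℤ,
      A x i = Real.pi / 2 + Real.pi * (theta L d i x : ℝ) + Atil x i
        + 2 * Real.pi * (k : ℝ))
    (x : Site L d) (i j : Fin d) (hij : i ≠ j) :
    (∃ m : ℤ, flux L d A x i j = flux L d Atil x i j + Real.pi + 2 * Real.pi * (m : ℝ)) ∧
    Real.cos (flux L d A x i j) = - Real.cos (flux L d Atil x i j) := by
  obtain ⟨k1, h1⟩ := hrel x i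
  obtain ⟨k2, h2⟩ := hrel (shift L d i x) j
  obtain ⟨k3, h3⟩ := hrel (shift L d j x) i
  obtain ⟨k4, h4⟩ := hrel x j
  obtain ⟨mi, hmi⟩ := coordVal_add_one L (x i)
  obtain ⟨mj, hmj⟩ := coordVal_add_one L (x j)
  have hsj := theta_shift L d i j hij x
  have hsi := theta_shift L d j i hij.symm x
  have key : ∃ m : ℤ, flux L d A x i j
      = flux L d Atil x i j + Real.pi + 2 * Real.pi * (m : ℝ) := by
    rcases lt_or_gt_of_ne hij with h | h
    · refine ⟨mi + k1 + k2 - k3 - k4, ?_⟩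
      unfold flux
      rw [h1, h2, h3, h4, hsj, hsi, if_pos h, if_neg (asymm h), hmi]
      push_cast
      ring
    · refine ⟨-mj - 1 + k1 + k2 - k3 - k4, ?_⟩
      unfold flux
      rw [h1, h2, h3, h4, hsj, hsi, if_pos h, if_neg (asymm h), hmj]
      push_cast
      ring
  refine ⟨key, ?_⟩
  obtain ⟨m, hm⟩ := key
  have : flux L d A x i j = (flux L d Atil x i j + Real.pi) + (m : ℝ) * (2 * Real.pi) := by
    rw [hm]; ring
  rw [this, Real.cos_add_int_mul_two_pi, Real.cos_add_pi]

end PiFlux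
end

section
/- Define Γ_x^{(1)} := a†_{x,↑}a†_{x,↓} + a_{x,↓}a_{x,↑} and Γ_x^{(2)} := i(a†_{x,↑}a†_{x,↓} − a_{x,↓}a_{x,↑}). Then the interaction Hamiltonian with zero gauge field admits the decomposition H̄_int(0) = Σ_{j=1}^d H̄_int,j − (dg/2) Σ_{x∈Λ} ([Γ_x^{(1)}]² − [Γ_x^{(2)}]²), where H̄_int,j := (g/4) Σ_{x∈Λ} [Γ_x^{(1)} + Γ_{x+e_j}^{(1)}]² − (g/4) Σ_{x∈Λ} [Γ_x^{(2)} − Γ_{x+e_j}^{(2)}]². -/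
open Complex Matrix
open scoped ComplexOrder

namespace PiFlux

variable {F : Type*} [Fintype F] [DecidableEq F]

/-- The gauged BCS interaction Hamiltonian `H̄_int(Ã)` (the `+g` convention),
the sum running over the nearest-neighbour bonds `{x, x+e_i}` of `Λ`. -/
noncomputable def HbarInt (L d : ℕ) [NeZero L] (g : ℝ) (A : Gauge L d)
    (a : Site L d → Bool → Matrix F F ℂ) : Matrix F F ℂ :=
  (g : ℂ) • ∑ x : Site L d, ∑ i : Fin d,
    (Complex.exp (2 * I * (A x i)) •
        ((a x true)ᴴ * (a x false)ᴴ * a (shift L d i x) false * a (shift L d i x) true)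
      + Complex.exp (-(2 * I * (A x i))) •
        ((a (shift L d i x) true)ᴴ * (a (shift L d i x) false)ᴴ * a x false * a x true))

/-- The hopping Hamiltonian `H̄_hop(Ã)` in the π-flux form. -/
noncomputable def HbarHop (L d : ℕ) [NeZero L] (κ : ℝ) (A : Gauge L d)
    (a : Site L d → Bool → Matrix F F ℂ) : Matrix F F ℂ :=
  (I * (κ : ℂ)) • ∑ σ : Bool, ∑ x : Site L d, ∑ i : Fin d,
    ((-1 : ℂ) ^ (theta L d i x)) •
      (Complex.exp (I * (A x i)) • ((a x σ)ᴴ * a (shift L d i x) σ)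
        - Complex.exp (-(I * (A x i))) • ((a (shift L d i x) σ)ᴴ * a x σ))

/-- The spin-`σ` part `H̄_hop,σ(Ã)` of the hopping Hamiltonian. -/
noncomputable def HbarHopSpin (L d : ℕ) [NeZero L] (κ : ℝ) (A : Gauge L d)
    (a : Site L d → Bool → Matrix F F ℂ) (σ : Bool) : Matrix F F ℂ :=
  (I * (κ : ℂ)) • ∑ x : Site L d, ∑ i : Fin d,
    ((-1 : ℂ) ^ (theta L d i x)) •
      (Complex.exp (I * (A x i)) • ((a x σ)ᴴ * a (shift L d i x) σ)
        - Complex.exp (-(I * (A x i))) • ((a (shift L d i x) σ)ᴴ * a x σ))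

/-- `Γ_x^{(1)} := a†_{x,↑} a†_{x,↓} + a_{x,↓} a_{x,↑}`. -/
noncomputable def Gamma1 (L d : ℕ) (a : Site L d → Bool → Matrix F F ℂ)
    (x : Site L d) : Matrix F F ℂ :=
  (a x true)ᴴ * (a x false)ᴴ + a x false * a x true

/-- `Γ_x^{(2)} := i (a†_{x,↑} a†_{x,↓} - a_{x,↓} a_{x,↑})`. -/
noncomputable def Gamma2 (L d : ℕ) (a : Site L d → Bool → Matrix F F ℂ)
    (x : Site L d) : Matrix F F ℂ :=
  I • ((a x true)ᴴ * (a x false)ᴴ - a x false * a x true)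

/-- `H̄_int,j := (g/4) Σ_x [Γ_x⁽¹⁾ + Γ_{x+e_j}⁽¹⁾]² - (g/4) Σ_x [Γ_x⁽²⁾ - Γ_{x+e_j}⁽²⁾]²`. -/
noncomputable def HbarIntJ (L d : ℕ) [NeZero L] (g : ℝ)
    (a : Site L d → Bool → Matrix F F ℂ) (j : Fin d) : Matrix F F ℂ :=
  ((g : ℂ) / 4) • ∑ x : Site L d, (Gamma1 L d a x + Gamma1 L d a (shift L d j x)) ^ 2
    - ((g : ℂ) / 4) • ∑ x : Site L d, (Gamma2 L d a x - Gamma2 L d a (shift L d j x)) ^ 2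

lemma comm2' {R : Type*} [Ring R] {A B C : R} (h1 : A*B = -(B*A)) (h2 : A*C = -(C*A)) :
    A*(B*C) = (B*C)*A := by
  calc A*(B*C) = (A*B)*C := (mul_assoc _ _ _).symm
    _ = -(B*A)*C := by rw [h1]
    _ = -(B*(A*C)) := by rw [neg_mul, mul_assoc]
    _ = -(B*(-(C*A))) := by rw [h2]
    _ = (B*C)*A := by rw [mul_neg, neg_neg, ← mul_assoc]

lemma comm4' {R : Type*} [Ring R] {A B C D : R} (h1 : A*C = -(C*A)) (h2 : A*D = -(D*A))
    (h3 : B*C = -(C*B)) (h4 : B*D = -(D*B)) :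
    (A*B)*(C*D) = (C*D)*(A*B) := by
  calc (A*B)*(C*D) = A*(B*(C*D)) := mul_assoc _ _ _
    _ = A*((C*D)*B) := by rw [comm2' h3 h4]
    _ = ((C*D)*A)*B := by rw [← mul_assoc, comm2' h1 h2]
    _ = (C*D)*(A*B) := by rw [mul_assoc]

lemma key_alg' {R : Type*} [Ring R] [Algebra ℂ R] (p q r s : R)
    (h1 : q * r = r * q) (h2 : s * p = p * s) :
    ((p + q) + (r + s))^2 - ((I • (p - q)) - (I • (r - s)))^2
      = (4:ℂ) • (p * s + r * q) + ((p+q)^2 - (I • (p-q))^2) + ((r+s)^2 - (I • (r-s))^2) := by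
  have hI : ∀ u v : R, (I • u) * (I • v) = -(u * v) := fun u v => by
    rw [smul_mul_smul_comm, Complex.I_mul_I, neg_one_smul]
  have h4 : (4:ℂ) • (p * s + r * q) = 4 * (p * s + r * q) := by
    rw [Algebra.smul_def, map_ofNat]
  simp only [sq, ← smul_sub, hI, h4]
  have e1 : (p+q+(r+s))*(p+q+(r+s)) = (p+q)*(p+q) + (r+s)*(r+s)
      + (p*r + p*s + q*r + q*s) + (r*p + r*q + s*p + s*q) := by noncomm_ring
  have e2 : (p-q-(r-s))*(p-q-(r-s)) = (p-q)*(p-q) + (r-s)*(r-s)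
      - (p*r - p*s - q*r + q*s) - (r*p - r*q - s*p + s*q) := by noncomm_ring
  rw [e1, e2, h1, h2]
  noncomm_ring

/-- The decomposition
`H̄_int(0) = Σ_{j=1}^d H̄_int,j - (dg/2) Σ_x ([Γ_x⁽¹⁾]² - [Γ_x⁽²⁾]²)`. -/
theorem interaction_gamma_decomposition (L d : ℕ) [NeZero L] (hd : 3 ≤ d)
    {F : Type*} [Fintype F] [DecidableEq F]
    (a : Site L d → Bool → Matrix F F ℂ) (hCAR : CAR a)
    (hcard : Fintype.card F = 2 ^ (2 * Fintype.card (Site L d)))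
    (g : ℝ) (hg : 0 ≤ g) :
    HbarInt L d g (fun _ _ => 0) a
      = ∑ j : Fin d, HbarIntJ L d g a j
        - ((d : ℂ) * (g : ℂ) / 2) •
            ∑ x : Site L d, ((Gamma1 L d a x) ^ 2 - (Gamma2 L d a x) ^ 2) := by
  classical
  obtain ⟨hC1, hC2⟩ := hCAR
  haveI : Fact (1 < 2 * L) := ⟨by have := NeZero.ne L; omega⟩
  set P : Site L d → Matrix F F ℂ := fun x => (a x true)ᴴ * (a x false)ᴴ with hPdef
  set Q : Site L d → Matrix F F ℂ := fun x => a x false * a x true with hQdef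
  have hG1 : ∀ x, Gamma1 L d a x = P x + Q x := fun _ => rfl
  have hG2 : ∀ x, Gamma2 L d a x = I • (P x - Q x) := fun _ => rfl
  -- anticommutation facts
  have hanti : ∀ x y : Site L d, x ≠ y → ∀ σ τ,
      a x σ * (a y τ)ᴴ = -((a y τ)ᴴ * a x σ) := by
    intro x y hxy σ τ
    have h := hC1 x y σ τ
    rw [if_neg (by tauto)] at h
    exact eq_neg_of_add_eq_zero_left h
  have hQP : ∀ x y : Site L d, x ≠ y → Q x * P y = P y * Q x := by
    intro x y hxy
    exact comm4' (hanti x y hxy _ _) (hanti x y hxy _ _)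
      (hanti x y hxy _ _) (hanti x y hxy _ _)
  -- shift facts
  have hsh : ∀ (j : Fin d) (x : Site L d),
      shift L d j x = x + Pi.single j 1 := by
    intro j x; funext k
    rcases eq_or_ne k j with rfl | hk
    · simp [shift, Pi.single_eq_same]
    · simp [shift, Function.update_of_ne hk, Pi.single_eq_of_ne hk]
  have hne : ∀ (j : Fin d) (x : Site L d), x ≠ shift L d j x := by
    intro j x h
    have h2 := congrFun h j
    rw [hsh] at h2
    simp only [Pi.add_apply, Pi.single_eq_same, left_eq_add] at h2
    exact one_ne_zero h2
  have hsum_shift : ∀ (j : Fin d) (G : Site L d → Matrix F F ℂ),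
      ∑ x : Site L d, G (shift L d j x) = ∑ x : Site L d, G x := by
    intro j G
    rw [Finset.sum_congr rfl (fun x _ => by rw [hsh j x])]
    exact Equiv.sum_comp (Equiv.addRight (Pi.single j (1 : ZMod (2*L)))) G
  -- rewrite HbarInt
  have hInt : HbarInt L d g (fun _ _ => 0) a
      = ∑ j : Fin d, (g:ℂ) • ∑ x : Site L d,
          (P x * Q (shift L d j x) + P (shift L d j x) * Q x) := by
    rw [HbarInt]
    simp only [Complex.ofReal_zero, mul_zero, neg_zero, Complex.exp_zero, one_smul]
    rw [Finset.sum_comm, Finset.smul_sum]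
    refine Finset.sum_congr rfl fun i _ => ?_
    congr 1
    refine Finset.sum_congr rfl fun x _ => ?_
    simp only [hPdef, hQdef, mul_assoc]
  rw [hInt]
  -- rewrite the constant term as a sum over j
  set T : Matrix F F ℂ := ∑ x : Site L d, ((Gamma1 L d a x)^2 - (Gamma2 L d a x)^2)
    with hTdef
  have hconst : ((d:ℂ) * (g:ℂ) / 2) • T = ∑ _j : Fin d, ((g:ℂ)/2) • T := by
    rw [Finset.sum_const, Finset.card_univ, Fintype.card_fin,
      ← Nat.cast_smul_eq_nsmul ℂ, smul_smul]
    congr 1; ring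
  rw [hconst, ← Finset.sum_sub_distrib]
  refine Finset.sum_congr rfl fun j _ => ?_
  -- per-direction identity
  have hiJ : HbarIntJ L d g a j = ((g:ℂ)/4) • ∑ x : Site L d,
      ((Gamma1 L d a x + Gamma1 L d a (shift L d j x))^2
        - (Gamma2 L d a x - Gamma2 L d a (shift L d j x))^2) := by
    rw [HbarIntJ, ← smul_sub, ← Finset.sum_sub_distrib]
  have hkey : ∀ x : Site L d,
      (Gamma1 L d a x + Gamma1 L d a (shift L d j x))^2
        - (Gamma2 L d a x - Gamma2 L d a (shift L d j x))^2
      = (4:ℂ) • (P x * Q (shift L d j x) + P (shift L d j x) * Q x)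
        + ((Gamma1 L d a x)^2 - (Gamma2 L d a x)^2)
        + ((Gamma1 L d a (shift L d j x))^2 - (Gamma2 L d a (shift L d j x))^2) := by
    intro x
    have hxy := hne j x
    rw [hG1 x, hG1 (shift L d j x), hG2 x, hG2 (shift L d j x)]
    exact key_alg' (P x) (Q x) (P (shift L d j x)) (Q (shift L d j x))
      (hQP x (shift L d j x) hxy) (hQP (shift L d j x) x hxy.symm)
  have hsplit : ∑ x : Site L d,
      ((4:ℂ) • (P x * Q (shift L d j x) + P (shift L d j x) * Q x)
        + ((Gamma1 L d a x)^2 - (Gamma2 L d a x)^2)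
        + ((Gamma1 L d a (shift L d j x))^2 - (Gamma2 L d a (shift L d j x))^2))
      = (4:ℂ) • (∑ x : Site L d, (P x * Q (shift L d j x) + P (shift L d j x) * Q x))
        + T + T := by
    rw [Finset.sum_add_distrib, Finset.sum_add_distrib, ← Finset.smul_sum,
      hsum_shift j (fun z => (Gamma1 L d a z)^2 - (Gamma2 L d a z)^2), ← hTdef]
  rw [hiJ, Finset.sum_congr rfl (fun x _ => hkey x), hsplit]
  set S : Matrix F F ℂ := ∑ x : Site L d,
    (P x * Q (shift L d j x) + P (shift L d j x) * Q x) with hSdef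
  module


end PiFlux
end
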